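/- arXiv:2107.07383 — 6 statements merged into one kernel-verified Lean document; each statement's English description precedes it below -/
import Mathlib

section
/- Let X be a finite multiset of points in ℤ^d with the ℓ_p norm (p ≥ 1), partitioned into k clusters X_1,...,X_k each of size s = |X|/k, such that the total cost ∑_i min_{c ∈ ℝ^d} ∑_{x ∈ X_i} ‖c − x‖_p is at most B. Then every cluster X_i contains at least s − 2B pairwise identical points. -/
open Finset

/-- The ℓ_p norm of a real vector, for integer `p ≥ 1`. -/
noncomputable def lpNorm (p : ℕ) {d : ℕ} (x : Fin d → ℝ) : ℝ :=
  (∑ i, |x i| ^ p) ^ ((1 : ℝ) / p)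

/-- Cost of a cluster (multiset of integer points) with respect to a given center `c`. -/
noncomputable def costW (p : ℕ) {d : ℕ} (T : Multiset (Fin d → ℤ)) (c : Fin d → ℝ) : ℝ :=
  (T.map (fun x => lpNorm p (fun i => c i - (x i : ℝ)))).sum

/-- Cost of a cluster: infimum over all centers `c ∈ ℝ^d`. -/
noncomputable def clCost (p : ℕ) {d : ℕ} (T : Multiset (Fin d → ℤ)) : ℝ :=
  sInf (Set.range (costW p T))

lemma lpNorm_nonneg (p : ℕ) {d : ℕ} (x : Fin d → ℝ) : 0 ≤ lpNorm p x := by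
  unfold lpNorm
  positivity

lemma abs_le_lpNorm {p : ℕ} (hp : 1 ≤ p) {d : ℕ} (x : Fin d → ℝ) (i : Fin d) :
    |x i| ≤ lpNorm p x := by
  have hp0 : (p : ℝ) ≠ 0 := by positivity
  have h1 : |x i| = (|x i| ^ p) ^ ((1:ℝ)/p) := by
    rw [← Real.rpow_natCast |x i| p, ← Real.rpow_mul (abs_nonneg _)]
    rw [mul_one_div, div_self hp0, Real.rpow_one]
  rw [h1]
  unfold lpNorm
  have hle : |x i| ^ p ≤ ∑ j, |x j| ^ p :=
    Finset.single_le_sum (f := fun j => |x j| ^ p) (fun j _ => pow_nonneg (abs_nonneg _) p) (mem_univ i)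
  exact Real.rpow_le_rpow (pow_nonneg (abs_nonneg _) p) hle (by positivity)

lemma costW_nonneg (p : ℕ) {d : ℕ} (T : Multiset (Fin d → ℤ)) (c : Fin d → ℝ) :
    0 ≤ costW p T c := by
  apply Multiset.sum_nonneg
  intro a ha
  obtain ⟨x, _, rfl⟩ := Multiset.mem_map.1 ha
  exact lpNorm_nonneg _ _

lemma clCost_nonneg (p : ℕ) {d : ℕ} (T : Multiset (Fin d → ℤ)) : 0 ≤ clCost p T :=
  Real.sInf_nonneg (by rintro x ⟨c, rfl⟩; exact costW_nonneg p T c)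

/-- every cluster of an equal `k`-clustering of cost at most `B`
contains at least `s - 2B` pairwise identical points. -/
theorem equal_clustering_many_identical_points
    {d k s B : ℕ} (p : ℕ) (hp : 1 ≤ p)
    (P : Multiset (Fin d → ℤ)) (hP : P.card = s * k)
    (X : Fin k → Multiset (Fin d → ℤ))
    (hpart : ∑ i, X i = P) (hsize : ∀ i, (X i).card = s)
    (hcost : ∑ i, clCost p (X i) ≤ (B : ℝ)) :
    ∀ i, ∃ x : Fin d → ℤ, (s : ℤ) - 2 * B ≤ ((X i).count x : ℤ) := by
  intro i
  set T := X i with hT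
  -- clCost p T ≤ B
  have hTB : clCost p T ≤ (B : ℝ) := by
    refine le_trans ?_ hcost
    exact Finset.single_le_sum (fun j _ => clCost_nonneg p (X j)) (mem_univ i)
  -- find a center c with costW p T c < B + 1/4
  have hne : (Set.range (costW p T)).Nonempty := ⟨costW p T 0, ⟨0, rfl⟩⟩
  have hbdd : BddBelow (Set.range (costW p T)) :=
    ⟨0, by rintro x ⟨c, rfl⟩; exact costW_nonneg p T c⟩
  have hlt : clCost p T < (B : ℝ) + 1/4 := lt_of_le_of_lt hTB (by linarith)
  obtain ⟨y, ⟨c, rfl⟩, hy⟩ := (csInf_lt_iff hbdd hne).1 hlt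
  -- split T into near and far points
  set f : (Fin d → ℤ) → ℝ := fun x => lpNorm p (fun j => c j - (x j : ℝ)) with hf
  set S := T.filter (fun x => f x < 1/2) with hS
  set S' := T.filter (fun x => ¬ f x < 1/2) with hS'
  have hsplit : S + S' = T := Multiset.filter_add_not _ T
  have hcostsplit : costW p T c = (S.map f).sum + (S'.map f).sum := by
    rw [← hsplit, costW, Multiset.map_add, Multiset.sum_add]
  have hSnon : (0:ℝ) ≤ (S.map f).sum := by
    apply Multiset.sum_nonneg
    intro a ha
    obtain ⟨x, _, rfl⟩ := Multiset.mem_map.1 ha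
    exact lpNorm_nonneg _ _
  have hS'lb : (S'.card : ℝ) * (1/2) ≤ (S'.map f).sum := by
    have := Multiset.card_nsmul_le_sum (s := S'.map f) (a := (1/2 : ℝ)) ?_
    · simpa [nsmul_eq_mul] using this
    · intro x hx
      obtain ⟨y, hy, rfl⟩ := Multiset.mem_map.1 hx
      have := (Multiset.mem_filter.1 hy).2
      linarith [not_lt.1 this]
  have hS'card : (S'.card : ℝ) ≤ 2 * ((B:ℝ) + 1/4) := by
    have h1 : (S'.card : ℝ) * (1/2) ≤ costW p T c := by
      rw [hcostsplit]; linarith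
    nlinarith
  have hcards : S.card + S'.card = s := by
    have := congrArg Multiset.card hsplit
    rw [Multiset.card_add] at this
    rw [this, hsize i]
  by_cases hSe : S = 0
  · -- trivial: s ≤ 2B, any point works
    refine ⟨0, ?_⟩
    have : S.card = 0 := by rw [hSe]; rfl
    have hcS' : Multiset.card S' = s := by omega
    have hs : (s : ℝ) ≤ 2 * ((B:ℝ) + 1/4) := by
      rw [← hcS']; exact hS'card
    have hsz : (s : ℤ) - 2 * B ≤ 0 := by
      have : (s : ℝ) - 2 * B ≤ 1/2 := by linarith
      have h2 : ((s : ℤ) - 2 * B : ℝ) ≤ 1/2 := by push_cast; linarith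
      by_contra hcon
      push_neg at hcon
      have : (1 : ℝ) ≤ ((s : ℤ) - 2 * B : ℝ) := by exact_mod_cast hcon
      linarith
    exact le_trans hsz (Int.ofNat_nonneg _)
  · obtain ⟨x, hx⟩ := Multiset.exists_mem_of_ne_zero hSe
    refine ⟨x, ?_⟩
    -- every element of S equals x
    have hall : ∀ y ∈ S, y = x := by
      intro y hy
      by_contra hne'
      obtain ⟨j, hj⟩ : ∃ j, y j ≠ x j := by
        by_contra hc; push_neg at hc; exact hne' (funext hc)
      have h1 : (1 : ℝ) ≤ |(y j : ℝ) - (x j : ℝ)| := by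
        have h0 : (1 : ℤ) ≤ |y j - x j| := Int.one_le_abs (sub_ne_zero.2 hj)
        exact_mod_cast h0
      have hxf : f x < 1/2 := (Multiset.mem_filter.1 hx).2
      have hyf : f y < 1/2 := (Multiset.mem_filter.1 hy).2
      have hx1 : |c j - (x j : ℝ)| ≤ f x := by
        simpa [hf] using abs_le_lpNorm hp (fun j => c j - ((x j : ℤ) : ℝ)) j
      have hy1 : |c j - (y j : ℝ)| ≤ f y := by
        simpa [hf] using abs_le_lpNorm hp (fun j => c j - ((y j : ℤ) : ℝ)) j
      have : |(y j : ℝ) - (x j : ℝ)| ≤ |c j - (x j : ℝ)| + |c j - (y j : ℝ)| := by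
        have := abs_sub_abs_le_abs_sub ((y j : ℝ)) ((x j : ℝ))
        calc |(y j : ℝ) - (x j : ℝ)| = |(c j - (x j:ℝ)) - (c j - (y j:ℝ))| := by ring_nf
        _ ≤ _ := abs_sub _ _
      linarith
    -- hence S ≤ replicate, count x T ≥ card S
    have hcount : S.card ≤ T.count x := by
      have h1 : S.count x = S.card := by
        rw [Multiset.count_eq_card]
        exact fun y hy => (hall y hy).symm
      rw [← h1]
      exact Multiset.count_le_of_le x (Multiset.filter_le _ T)
    -- card S ≥ s - 2(B+1/4)
    have hlb : (s : ℝ) - 2 * ((B:ℝ) + 1/4) ≤ (S.card : ℝ) := by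
      have : (S.card : ℝ) + (S'.card : ℝ) = s := by exact_mod_cast hcards
      linarith
    have hreal : ((s : ℤ) - 2 * B - 1 : ℝ) < (T.count x : ℝ) := by
      push_cast
      have : (S.card : ℝ) ≤ T.count x := by exact_mod_cast hcount
      linarith
    have : (s : ℤ) - 2 * B - 1 < (T.count x : ℤ) := by exact_mod_cast hreal
    omega
end

section
/- Let X be a finite multiset of points in ℤ^d with an equal k-clustering {X_1,...,X_k} of cost at most B, where each cluster has size s = |X|/k ≥ 4B+1. Then for every i, the optimum median c_i of X_i equals some point x ∈ X_i, and X_i contains at least s − 2B copies of x. -/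
open Finset

lemma lpNorm_eq_zero {p : ℕ} (hp : 1 ≤ p) {d : ℕ} {x : Fin d → ℝ}
    (h : lpNorm p x ≤ 0) : ∀ i, x i = 0 := by
  have h0 : lpNorm p x = 0 := le_antisymm h (lpNorm_nonneg p x)
  have hsum : (∑ i, |x i| ^ p) = 0 := by
    have := (Real.rpow_eq_zero_iff_of_nonneg
      (Finset.sum_nonneg fun i _ => pow_nonneg (abs_nonneg _) p)).mp h0
    exact this.1
  intro i
  have := (Finset.sum_eq_zero_iff_of_nonneg
    (fun j _ => pow_nonneg (abs_nonneg (x j)) p)).mp hsum i (Finset.mem_univ i)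
  have hpne : p ≠ 0 := by omega
  have := pow_eq_zero_iff hpne |>.mp this
  simpa using this

lemma lpNorm_self_zero {p : ℕ} (hp : 1 ≤ p) {d : ℕ} : lpNorm p (fun _ : Fin d => (0:ℝ)) = 0 := by
  have hpne : (p : ℝ) ≠ 0 := by positivity
  simp [lpNorm, zero_pow (by omega : p ≠ 0)]
  exact Real.zero_rpow (inv_ne_zero hpne)

lemma lpNorm_triangle {p : ℕ} (hp : 1 ≤ p) {d : ℕ} (x y : Fin d → ℝ) :
    lpNorm p (fun i => x i + y i) ≤ lpNorm p x + lpNorm p y := by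
  have hp' : (1:ℝ) ≤ (p:ℝ) := by exact_mod_cast hp
  have := Real.Lp_add_le (Finset.univ : Finset (Fin d)) x y hp'
  simpa [lpNorm, Real.rpow_natCast] using this

lemma lpNorm_sub_comm (p : ℕ) {d : ℕ} (x y : Fin d → ℝ) :
    lpNorm p (fun i => x i - y i) = lpNorm p (fun i => y i - x i) := by
  simp [lpNorm, abs_sub_comm]

lemma coord_le_lpNorm {p : ℕ} (hp : 1 ≤ p) {d : ℕ} (x : Fin d → ℝ) (j : Fin d) :
    |x j| ≤ lpNorm p x := by
  have hpne : (p : ℝ) ≠ 0 := by positivity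
  have h1 : |x j| = ((|x j| ^ p : ℝ)) ^ ((1:ℝ)/p) := by
    rw [← Real.rpow_natCast (|x j|) p, ← Real.rpow_mul (abs_nonneg _), mul_one_div,
      div_self hpne, Real.rpow_one]
  rw [h1, lpNorm]
  exact Real.rpow_le_rpow (pow_nonneg (abs_nonneg _) p)
    (Finset.single_le_sum (f := fun i => |x i| ^ p)
      (fun i _ => pow_nonneg (abs_nonneg _) p) (Finset.mem_univ j)) (by positivity)

lemma one_le_lpNorm_int {p : ℕ} (hp : 1 ≤ p) {d : ℕ} {x y : Fin d → ℤ} (hxy : x ≠ y) :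
    1 ≤ lpNorm p (fun i => (x i : ℝ) - (y i : ℝ)) := by
  obtain ⟨j, hj⟩ : ∃ j, x j ≠ y j := by
    by_contra h; push_neg at h; exact hxy (funext h)
  calc (1:ℝ) ≤ |(x j : ℝ) - (y j : ℝ)| := by
        have : (1:ℤ) ≤ |x j - y j| := Int.one_le_abs (sub_ne_zero.mpr hj)
        calc (1:ℝ) = ((1:ℤ):ℝ) := by norm_num
          _ ≤ ((|x j - y j| : ℤ) : ℝ) := by exact_mod_cast this
          _ = |(x j : ℝ) - (y j : ℝ)| := by push_cast; ring_nf
    _ ≤ _ := coord_le_lpNorm hp (fun i => (x i : ℝ) - (y i : ℝ)) j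

lemma sum_map_indicator {α : Type*} [DecidableEq α] (T : Multiset α) (x : α) (a : ℝ) :
    (T.map (fun y => if y = x then a else 0)).sum = (T.count x : ℝ) * a := by
  induction T using Multiset.induction with
  | empty => simp
  | cons b T ih =>
    by_cases hb : b = x
    · simp [Multiset.count_cons, hb, ih, add_mul]; ring
    · simp [Multiset.count_cons, hb, ih, add_mul]
      intro h; exact absurd h.symm hb

/-- in an equal `k`-clustering of cost at most `B` with cluster size
`s ≥ 4B+1`, every optimum median of a cluster equals a point of that cluster occurring
with multiplicity at least `s - 2B`. -/
theorem optimum_median_is_frequent_point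
    {d k s B : ℕ} (p : ℕ) (hp : 1 ≤ p)
    (P : Multiset (Fin d → ℤ)) (hP : P.card = s * k)
    (X : Fin k → Multiset (Fin d → ℤ))
    (hpart : ∑ i, X i = P) (hsize : ∀ i, (X i).card = s) (hs : 4 * B + 1 ≤ s)
    (hcost : ∑ i, clCost p (X i) ≤ (B : ℝ)) :
    ∀ i, ∀ c : Fin d → ℝ,
      (∀ c' : Fin d → ℝ, costW p (X i) c ≤ costW p (X i) c') →
      ∃ x : Fin d → ℤ, x ∈ X i ∧ c = (fun j => (x j : ℝ)) ∧
        (s : ℤ) - 2 * B ≤ ((X i).count x : ℤ) := by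
  classical
  intro i c hopt
  set T := X i with hT
  have hcard : T.card = s := hsize i
  have hclnn : ∀ j, 0 ≤ clCost p (X j) := fun j =>
    le_csInf ⟨costW p (X j) 0, ⟨0, rfl⟩⟩ (by rintro b ⟨c', rfl⟩; exact costW_nonneg _ _ _)
  have hcl_le : clCost p T ≤ (B : ℝ) :=
    le_trans (Finset.single_le_sum (f := fun j => clCost p (X j))
      (fun j _ => hclnn j) (Finset.mem_univ i)) hcost
  have hcB : costW p T c ≤ (B : ℝ) := by
    refine le_trans ?_ hcl_le
    exact le_csInf ⟨costW p T c, ⟨c, rfl⟩⟩ (by rintro b ⟨c', rfl⟩; exact hopt c')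
  -- split into near and far points
  set f : (Fin d → ℤ) → ℝ := fun y => lpNorm p (fun j => c j - (y j : ℝ)) with hf
  set S := T.filter (fun y => f y < 1/2) with hSdef
  set S' := T.filter (fun y => ¬ f y < 1/2) with hS'def
  have hsplit : S + S' = T := Multiset.filter_add_not _ T
  have hcards : S.card + S'.card = s := by
    rw [← hcard, ← hsplit, Multiset.card_add]
  have hcsplit : costW p T c = (S.map f).sum + (S'.map f).sum := by
    rw [costW, ← hsplit, Multiset.map_add, Multiset.sum_add]
  have hS'sum : (S'.card : ℝ) * (1/2) ≤ (S'.map f).sum := by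
    have h1 : (S'.map (fun _ => (1/2 : ℝ))).sum ≤ (S'.map f).sum := by
      apply Multiset.sum_map_le_sum_map
      intro y hy
      have := (Multiset.mem_filter.mp hy).2
      exact le_of_not_gt this
    simpa [Multiset.map_const', Multiset.sum_replicate, nsmul_eq_mul] using h1
  have hSsum : 0 ≤ (S.map f).sum := by
    apply Multiset.sum_nonneg
    rintro a ha
    obtain ⟨y, -, rfl⟩ := Multiset.mem_map.mp ha
    exact lpNorm_nonneg _ _
  have hS'le : (S'.card : ℝ) ≤ 2 * B := by
    have : (S'.card : ℝ) * (1/2) ≤ (B : ℝ) := by linarith [hcsplit ▸ hcB]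
    linarith
  have hScard_ge : (s : ℝ) - 2 * B ≤ (S.card : ℝ) := by
    have : (S.card : ℝ) + (S'.card : ℝ) = s := by exact_mod_cast hcards
    linarith
  have hsB : (4 * B + 1 : ℝ) ≤ (s : ℝ) := by exact_mod_cast hs
  have hSne : S ≠ 0 := by
    intro h0
    rw [h0] at hScard_ge
    simp at hScard_ge
    linarith
  obtain ⟨x, hxS⟩ := Multiset.exists_mem_of_ne_zero hSne
  have hxT : x ∈ T := Multiset.mem_of_le (Multiset.filter_le _ T) hxS
  have hxnear : f x < 1/2 := (Multiset.mem_filter.mp hxS).2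
  have hall : ∀ y ∈ S, x = y := by
    intro y hy
    by_contra hne
    have h1 : 1 ≤ lpNorm p (fun j => (x j : ℝ) - (y j : ℝ)) := one_le_lpNorm_int hp hne
    have htri : lpNorm p (fun j => (x j : ℝ) - (y j : ℝ)) ≤
        lpNorm p (fun j => (x j : ℝ) - c j) + lpNorm p (fun j => c j - (y j : ℝ)) := by
      have h := lpNorm_triangle hp (fun j => (x j : ℝ) - c j) (fun j => c j - (y j : ℝ))
      have he : (fun j => ((x j : ℝ) - c j) + (c j - (y j : ℝ)))
          = (fun j => (x j : ℝ) - (y j : ℝ)) := by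
        funext j; ring
      rwa [he] at h
    have hxc : lpNorm p (fun j => (x j : ℝ) - c j) < 1/2 := by
      rw [lpNorm_sub_comm]; exact hxnear
    have hyc : lpNorm p (fun j => c j - (y j : ℝ)) < 1/2 := (Multiset.mem_filter.mp hy).2
    linarith
  have hcount : S.card ≤ T.count x := by
    rw [← Multiset.count_eq_card.mpr hall]
    exact Multiset.count_le_of_le x (Multiset.filter_le _ T)
  set m := T.count x with hm
  have hmge : (s : ℝ) - 2 * B ≤ (m : ℝ) :=
    le_trans hScard_ge (by exact_mod_cast hcount)
  -- show c equals x
  set δ := lpNorm p (fun j => c j - (x j : ℝ)) with hδ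
  have hδ0 : 0 ≤ δ := lpNorm_nonneg _ _
  set g : (Fin d → ℤ) → ℝ :=
    fun y => lpNorm p (fun j => (x j : ℝ) - (y j : ℝ)) + ((if y = x then 2*δ else 0) + (-δ))
    with hg
  have hptwise : ∀ y ∈ T, g y ≤ f y := by
    intro y hyT
    by_cases hyx : y = x
    · subst hyx
      have h0 : lpNorm p (fun j => (y j : ℝ) - (y j : ℝ)) = 0 := by
        have : (fun j => (y j : ℝ) - (y j : ℝ)) = (fun _ : Fin d => (0:ℝ)) := by
          funext j; ring
        rw [this]; exact lpNorm_self_zero hp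
      have hfx : f y = δ := rfl
      rw [hfx]
      simp only [hg, if_pos rfl, h0, if_true]
      linarith
    · have htri : lpNorm p (fun j => (x j : ℝ) - (y j : ℝ)) ≤
          lpNorm p (fun j => (x j : ℝ) - c j) + lpNorm p (fun j => c j - (y j : ℝ)) := by
        have h := lpNorm_triangle hp (fun j => (x j : ℝ) - c j) (fun j => c j - (y j : ℝ))
        have he : (fun j => ((x j : ℝ) - c j) + (c j - (y j : ℝ)))
            = (fun j => (x j : ℝ) - (y j : ℝ)) := by funext j; ring
        rwa [he] at h
      have hxcδ : lpNorm p (fun j => (x j : ℝ) - c j) = δ := by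
        rw [hδ, lpNorm_sub_comm]
      simp only [hg, hf, if_neg hyx]
      rw [hxcδ] at htri
      linarith
  have hsum_le : (T.map g).sum ≤ costW p T c :=
    Multiset.sum_map_le_sum_map g f hptwise
  have hsum_eq : (T.map g).sum
      = costW p T (fun j => (x j : ℝ)) + ((m : ℝ) * (2*δ) + (s : ℝ) * (-δ)) := by
    rw [hg, Multiset.sum_map_add, Multiset.sum_map_add]
    have h1 : (T.map (fun y => if y = x then 2*δ else 0)).sum = (m : ℝ) * (2*δ) :=
      sum_map_indicator T x (2*δ)
    have h2 : (T.map (fun _ => -δ)).sum = (s : ℝ) * (-δ) := by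
      simp [Multiset.map_const', Multiset.sum_replicate, hcard, nsmul_eq_mul]
    rw [h1, h2]
    rfl
  have hopt' : costW p T c ≤ costW p T (fun j => (x j : ℝ)) := hopt _
  have hkey : (m : ℝ) * (2*δ) + (s : ℝ) * (-δ) ≤ 0 := by
    rw [hsum_eq] at hsum_le
    linarith
  have hδle : δ ≤ 0 := by
    nlinarith [hδ0, hmge, hsB, hkey]
  have hczero : ∀ j, c j - (x j : ℝ) = 0 := lpNorm_eq_zero hp hδle
  refine ⟨x, hxT, ?_, ?_⟩
  · funext j
    have := hczero j
    linarith
  · have : (s : ℝ) - 2 * B ≤ (m : ℝ) := hmge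
    exact_mod_cast this
end

section
/- Let {X_1,...,X_k} be an equal k-clustering of a multiset X ⊆ ℤ^d of cost at most B with cluster size s = n/k ≥ 4B+1, and let Y ⊆ X be a submultiset of at least B+1 identical points. Then there exists i ∈ {1,...,k} such that the optimum median of X_i equals the common value of the points of Y. -/
open Finset

lemma lpNorm_neg (p : ℕ) {d : ℕ} (x : Fin d → ℝ) :
    lpNorm p (fun i => - x i) = lpNorm p x := by
  unfold lpNorm; simp [abs_neg]

lemma lpNorm_int_ge_one {p : ℕ} (hp : 1 ≤ p) {d : ℕ} {x y : Fin d → ℤ} (h : x ≠ y) :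
    1 ≤ lpNorm p (fun i => (x i : ℝ) - (y i : ℝ)) := by
  obtain ⟨j, hj⟩ : ∃ j, x j ≠ y j := by
    by_contra hc; push_neg at hc; exact h (funext hc)
  have h1 : (1:ℝ) ≤ |(x j : ℝ) - (y j : ℝ)| := by
    have h0 : (1:ℤ) ≤ |x j - y j| := Int.one_le_abs (sub_ne_zero.mpr hj)
    have : ((1:ℤ):ℝ) ≤ ((|x j - y j| : ℤ) : ℝ) := by exact_mod_cast h0
    simpa [Int.cast_abs] using this
  have hsum : (1:ℝ) ≤ ∑ i, |(x i : ℝ) - (y i : ℝ)| ^ p := by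
    calc (1:ℝ) = 1 ^ p := (one_pow p).symm
      _ ≤ |(x j : ℝ) - (y j : ℝ)| ^ p := pow_le_pow_left₀ zero_le_one h1 p
      _ ≤ ∑ i, |(x i : ℝ) - (y i : ℝ)| ^ p :=
          Finset.single_le_sum (f := fun i => |(x i : ℝ) - (y i : ℝ)| ^ p) (fun i _ => pow_nonneg (abs_nonneg _) _) (Finset.mem_univ j)
  unfold lpNorm
  exact Real.one_le_rpow hsum (by positivity)

lemma lpNorm_rev {p : ℕ} (hp : 1 ≤ p) {d : ℕ} (c yv x : Fin d → ℝ) :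
    lpNorm p (fun i => yv i - x i) - lpNorm p (fun i => c i - yv i) ≤
      lpNorm p (fun i => c i - x i) := by
  have h := lpNorm_triangle hp (fun i => yv i - c i) (fun i => c i - x i)
  have h2 : lpNorm p (fun i => yv i - c i) = lpNorm p (fun i => c i - yv i) := by
    rw [← lpNorm_neg p (fun i => c i - yv i)]; congr 1; funext i; ring
  have h3 : lpNorm p (fun i => (yv i - c i) + (c i - x i)) = lpNorm p (fun i => yv i - x i) := by
    congr 1; funext i; ring
  rw [h3, h2] at h
  linarith

lemma lpNorm_zero_self {p : ℕ} (hp : 1 ≤ p) {d : ℕ} (yv : Fin d → ℝ) :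
    lpNorm p (fun i => yv i - yv i) = 0 := by
  unfold lpNorm
  have h0 : ∀ i ∈ Finset.univ, |(fun i => yv i - yv i) i| ^ p = 0 := fun i _ => by
    simp [zero_pow (by omega : p ≠ 0)]
  rw [Finset.sum_congr rfl h0, Finset.sum_const, smul_zero]
  exact Real.zero_rpow (by positivity)


lemma costW_split (p : ℕ) {d : ℕ} (T : Multiset (Fin d → ℤ)) (y : Fin d → ℤ) (c : Fin d → ℝ) :
    costW p T c = (T.count y : ℝ) * lpNorm p (fun i => c i - (y i : ℝ))
      + costW p (T.filter (fun x => ¬ x = y)) c := by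
  classical
  conv_lhs => rw [← Multiset.filter_add_not (fun x => x = y) T]
  rw [costW, Multiset.map_add, Multiset.sum_add, Multiset.filter_eq']
  simp [costW, Multiset.map_replicate, Multiset.sum_replicate, mul_comm]

set_option maxHeartbeats 1000000 in
lemma costW_ge_count {p : ℕ} (hp : 1 ≤ p) {d : ℕ} (T : Multiset (Fin d → ℤ)) (y : Fin d → ℤ)
    (hmaj : 2 * T.count y ≤ T.card) (c : Fin d → ℝ) :
    (T.count y : ℝ) ≤ costW p T c := by
  classical
  set r := lpNorm p (fun i => c i - (y i : ℝ)) with hr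
  have hr0 : 0 ≤ r := lpNorm_nonneg _ _
  set C := T.filter (fun x => ¬ x = y) with hC
  have hCcard : T.count y + C.card = T.card := by
    have := congrArg Multiset.card (Multiset.filter_add_not (fun x => x = y) T)
    rw [Multiset.card_add, Multiset.filter_eq', Multiset.card_replicate] at this
    exact this
  have hterm : ∀ x ∈ C, max 0 (1 - r) ≤ lpNorm p (fun i => c i - (x i : ℝ)) := by
    intro x hx
    have hxy : ¬ x = y := (Multiset.mem_filter.mp hx).2
    have h1 : (1:ℝ) ≤ lpNorm p (fun i => (y i : ℝ) - (x i : ℝ)) := by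
      simpa using lpNorm_int_ge_one hp (Ne.symm hxy)
    have := lpNorm_rev hp c (fun i => (y i : ℝ)) (fun i => (x i : ℝ))
    refine max_le ?_ (by linarith)
    exact lpNorm_nonneg _ _
  have hCsum : (C.card : ℝ) * max 0 (1 - r) ≤ costW p C c := by
    have := Multiset.sum_map_le_sum_map (s := C) (fun _ => max 0 (1 - r))
      (fun x => lpNorm p (fun i => c i - (x i : ℝ))) hterm
    simpa [costW, Multiset.map_const', Multiset.sum_replicate, nsmul_eq_mul] using this
  rw [costW_split p T y c]
  have htc : (T.count y : ℝ) ≤ (C.card : ℝ) := by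
    have : T.count y ≤ C.card := by omega
    exact_mod_cast this
  have hm0 : 0 ≤ max 0 (1 - r) := le_max_left _ _
  have h1r : (1:ℝ) ≤ r + max 0 (1 - r) := by
    rcases le_total r 1 with h | h
    · rw [max_eq_right (by linarith)]; linarith
    · linarith [le_max_left (0:ℝ) (1 - r)]
  calc (T.count y : ℝ) = (T.count y : ℝ) * 1 := by ring
    _ ≤ (T.count y : ℝ) * (r + max 0 (1 - r)) := by
        apply mul_le_mul_of_nonneg_left h1r (by positivity)
    _ = (T.count y : ℝ) * r + (T.count y : ℝ) * max 0 (1 - r) := by ring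
    _ ≤ (T.count y : ℝ) * r + (C.card : ℝ) * max 0 (1 - r) := by
        have := mul_le_mul_of_nonneg_right htc hm0; linarith
    _ ≤ (T.count y : ℝ) * r + costW p C c := by linarith

set_option maxHeartbeats 1000000 in
lemma costW_y_le {p : ℕ} (hp : 1 ≤ p) {d : ℕ} (T : Multiset (Fin d → ℤ)) (y : Fin d → ℤ)
    (hmaj : T.card ≤ 2 * T.count y) (c : Fin d → ℝ) :
    costW p T (fun j => (y j : ℝ)) ≤ costW p T c := by
  classical
  set r := lpNorm p (fun i => c i - (y i : ℝ)) with hr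
  have hr0 : 0 ≤ r := lpNorm_nonneg _ _
  set C := T.filter (fun x => ¬ x = y) with hC
  have hCcard : T.count y + C.card = T.card := by
    have := congrArg Multiset.card (Multiset.filter_add_not (fun x => x = y) T)
    rw [Multiset.card_add, Multiset.filter_eq', Multiset.card_replicate] at this
    exact this
  have hterm : ∀ x ∈ C,
      lpNorm p (fun i => (y i : ℝ) - (x i : ℝ)) - r ≤ lpNorm p (fun i => c i - (x i : ℝ)) :=
    fun x _ => lpNorm_rev hp c _ _
  have hCsum : costW p C (fun j => (y j : ℝ)) - (C.card : ℝ) * r ≤ costW p C c := by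
    have h := Multiset.sum_map_le_sum_map (s := C)
      (fun x => lpNorm p (fun i => (y i : ℝ) - (x i : ℝ)) - r)
      (fun x => lpNorm p (fun i => c i - (x i : ℝ))) hterm
    have heq : (C.map (fun x => lpNorm p (fun i => (y i : ℝ) - (x i : ℝ)) - r)).sum
        = costW p C (fun j => (y j : ℝ)) - (C.card : ℝ) * r := by
      rw [costW]
      induction C using Multiset.induction_on with
      | empty => simp
      | cons a s ih => simp [Multiset.map_cons, Multiset.sum_cons, ih]; ring
    rw [heq] at h
    exact h
  rw [costW_split p T y c, costW_split p T y (fun j => (y j : ℝ))]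
  rw [lpNorm_zero_self hp]
  have htc : (C.card : ℝ) ≤ (T.count y : ℝ) := by
    have : C.card ≤ T.count y := by omega
    exact_mod_cast this
  have := mul_le_mul_of_nonneg_right htc hr0
  have h0 : (0:ℝ) ≤ (T.count y : ℝ) * r := by positivity
  linarith

/-- if an equal `k`-clustering of cost at most `B` has cluster size
`s ≥ 4B+1` and `P` contains at least `B+1` copies of a point `y`, then some cluster
has `y` as an optimum median. -/
theorem frequent_point_is_some_optimum_median
    {d k s B : ℕ} (p : ℕ) (hp : 1 ≤ p)
    (P : Multiset (Fin d → ℤ)) (hP : P.card = s * k)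
    (X : Fin k → Multiset (Fin d → ℤ))
    (hpart : ∑ i, X i = P) (hsize : ∀ i, (X i).card = s) (hs : 4 * B + 1 ≤ s)
    (hcost : ∑ i, clCost p (X i) ≤ (B : ℝ))
    (y : Fin d → ℤ) (hY : B + 1 ≤ P.count y) :
    ∃ i, ∀ c' : Fin d → ℝ,
      costW p (X i) (fun j => (y j : ℝ)) ≤ costW p (X i) c' := by
  classical
  by_cases hex : ∃ i, (X i).card < 2 * (X i).count y
  · obtain ⟨i, hi⟩ := hex
    exact ⟨i, fun c' => costW_y_le hp (X i) y hi.le c'⟩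
  · exfalso
    push_neg at hex
    have h1 : ∀ i, (((X i).count y : ℕ) : ℝ) ≤ clCost p (X i) := by
      intro i
      refine le_csInf ⟨costW p (X i) (fun _ => 0), ⟨fun _ => 0, rfl⟩⟩ ?_
      rintro b ⟨c, rfl⟩
      exact costW_ge_count hp (X i) y (hex i) c
    have hcnt : P.count y = ∑ i, (X i).count y := by
      rw [← hpart, Multiset.count_sum']
    have h2 : ((P.count y : ℕ) : ℝ) ≤ (B : ℝ) := by
      calc ((P.count y : ℕ) : ℝ) = ∑ i, (((X i).count y : ℕ) : ℝ) := by
            rw [hcnt]; push_cast; rfl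
        _ ≤ ∑ i, clCost p (X i) := Finset.sum_le_sum (fun i _ => h1 i)
        _ ≤ (B : ℝ) := hcost
    have h3 : ((B : ℕ) : ℝ) + 1 ≤ ((P.count y : ℕ) : ℝ) := by exact_mod_cast hY
    linarith
end

section
/- In the reduction from Perfect r-Set Matching, with vectors v_i, f_j ∈ {0,1}^{2rn} defined as follows, one has ‖v_i − f_j‖_0 = 3r − 2 if vertex v_i belongs to hyperedge E_j, and ‖v_i − f_j‖_0 = 3r otherwise. -/
/-!
`v_i` and `f_E` are the indicator vectors of the block `R_i`, of size `2r`, and of the set `P_E`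
of distinguished positions of `E`, of size `r`. Their Hamming distance is
`|R_i| + |P_E| - 2 |R_i ∩ P_E|`, and `R_i` meets `P_E` exactly in `p_i` when `i ∈ E`, and not at
all otherwise.
-/

open Finset

def hdist {D : ℕ} (x y : Fin D → ℤ) : ℕ :=
  (Finset.univ.filter (fun j => x j ≠ y j)).card

/-- Vertex vector `v_i ∈ {0,1}^{2rn}`: ones exactly on the block
`R_i = {2r·i, …, 2r·(i+1)-1}` (0-indexed). -/
def vvec (r n : ℕ) (i : Fin n) : Fin (2 * r * n) → ℤ :=
  fun j => if 2 * r * i.1 ≤ j.1 ∧ j.1 < 2 * r * (i.1 + 1) then 1 else 0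

/-- Hyperedge vector `f_E ∈ {0,1}^{2rn}`: ones exactly at the distinguished positions
`p_s = 2r·s` for the vertices `s ∈ E`. -/
def fvec (r n : ℕ) (E : Finset (Fin n)) : Fin (2 * r * n) → ℤ :=
  fun h => if ∃ s ∈ E, h.1 = 2 * r * s.1 then 1 else 0

theorem Finset.card_symmDiff_add_two_mul_card_inter {α : Type*} [DecidableEq α]
    (s t : Finset α) : #(symmDiff s t) + 2 * #(s ∩ t) = #s + #t := by
  rw [symmDiff_def, sup_eq_union, card_union_of_disjoint disjoint_sdiff_sdiff]
  have hs := card_inter_add_card_sdiff s t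
  have ht := card_inter_add_card_sdiff t s
  rw [inter_comm] at ht
  omega

theorem Fin.card_filter_val_mem_Ico {N a b : ℕ} (hb : b ≤ N) :
    #{j : Fin N | a ≤ j ∧ (j : ℕ) < b} = b - a := by
  rw [← Nat.card_Ico, ← card_map Fin.valEmbedding]
  congr 1
  ext x
  simp only [mem_map, mem_filter, mem_univ, true_and, Fin.valEmbedding_apply, mem_Ico]
  constructor
  · rintro ⟨j, hj, rfl⟩
    exact hj
  · intro hx
    exact ⟨⟨x, hx.2.trans_le hb⟩, hx, rfl⟩

theorem hdist_indicator {D : ℕ} (s t : Finset (Fin D)) :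
    hdist (fun j => if j ∈ s then 1 else 0) (fun j => if j ∈ t then 1 else 0) =
      #(symmDiff s t) := by
  unfold hdist
  congr 1
  ext j
  by_cases hs : j ∈ s <;> by_cases ht : j ∈ t <;> simp [hs, ht, Finset.mem_symmDiff]

theorem mul_mem_Ico_mul_iff {k s i : ℕ} (hk : 0 < k) :
    k * i ≤ k * s ∧ k * s < k * (i + 1) ↔ s = i := by
  rw [Nat.mul_le_mul_left_iff hk, Nat.mul_lt_mul_left hk]
  omega

section Blocks

variable {k n : ℕ}

def block (k n : ℕ) (i : Fin n) : Finset (Fin (k * n)) :=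
  {j | k * i ≤ j ∧ (j : ℕ) < k * (i + 1)}

def blockStart (hk : 0 < k) : Fin n ↪ Fin (k * n) where
  toFun s := ⟨k * s, Nat.mul_lt_mul_of_pos_left s.2 hk⟩
  inj' _ _ h := Fin.ext (Nat.eq_of_mul_eq_mul_left hk (Fin.val_eq_of_eq h))

@[simp]
theorem val_blockStart (hk : 0 < k) (s : Fin n) : (blockStart hk s : ℕ) = k * s :=
  rfl

theorem card_block (i : Fin n) : #(block k n i) = k := by
  rw [block, Fin.card_filter_val_mem_Ico (Nat.mul_le_mul_left k i.2), Nat.mul_succ]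
  omega

theorem mem_block_blockStart (hk : 0 < k) {i s : Fin n} :
    blockStart hk s ∈ block k n i ↔ s = i := by
  simp [block, mul_mem_Ico_mul_iff hk, Fin.ext_iff]

theorem card_block_inter_map_blockStart (hk : 0 < k) (i : Fin n) (E : Finset (Fin n)) :
    #(block k n i ∩ E.map (blockStart hk)) = if i ∈ E then 1 else 0 := by
  have h : block k n i ∩ E.map (blockStart hk) = (E.filter (· = i)).map (blockStart hk) := by
    ext j
    simp only [mem_inter, mem_map, mem_filter]
    constructor
    · rintro ⟨hj, s, hs, rfl⟩
      exact ⟨s, ⟨hs, (mem_block_blockStart hk).1 hj⟩, rfl⟩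
    · rintro ⟨s, ⟨hs, rfl⟩, rfl⟩
      exact ⟨(mem_block_blockStart hk).2 rfl, s, hs, rfl⟩
  rw [h, card_map, filter_eq']
  split_ifs <;> simp

end Blocks

theorem vvec_eq_indicator (r n : ℕ) (i : Fin n) :
    vvec r n i = fun j => if j ∈ block (2 * r) n i then 1 else 0 := by
  ext j
  simp [vvec, block]

theorem fvec_eq_indicator {r : ℕ} (hr : 0 < 2 * r) (n : ℕ) (E : Finset (Fin n)) :
    fvec r n E = fun j => if j ∈ E.map (blockStart hr) then 1 else 0 := by
  ext j
  simp [fvec, Fin.ext_iff, eq_comm]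

/-- `‖v_i - f_E‖₀ = 3r - 2` if `v_i ∈ E`, and `3r` otherwise. -/
theorem hamming_vertex_edge_vector
    {r n : ℕ} (hr : 1 ≤ r) (i : Fin n) (E : Finset (Fin n)) (hE : E.card = r) :
    hdist (vvec r n i) (fvec r n E) = if i ∈ E then 3 * r - 2 else 3 * r := by
  have hr2 : 0 < 2 * r := by omega
  have key := card_symmDiff_add_two_mul_card_inter (block (2 * r) n i) (E.map (blockStart hr2))
  rw [card_block, card_map, hE, card_block_inter_map_blockStart] at key
  rw [vvec_eq_indicator, fvec_eq_indicator hr2, hdist_indicator]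
  split_ifs at key ⊢ <;> omega
end

section
/- Let H be an r-uniform hypergraph (r ≥ 3) on n vertices with n divisible by r, and let (X, k, B) be the instance of equal clustering constructed from H with cluster size r, k = n + m − n/r, and B = (3r−2)n. If H has a perfect matching, then X admits an equal k-clustering of Hamming cost at most B. -/
open Finset

/-- Optimal Hamming cost of a cluster: minimum over all integer centers of the sum of
Hamming distances from the points to the center. -/
noncomputable def hClusterCost {D : ℕ} (T : Multiset (Fin D → ℤ)) : ℕ :=
  sInf {m | ∃ c : Fin D → ℤ, m = (T.map (fun x => hdist c x)).sum}

lemma hdist_self {D : ℕ} (x : Fin D → ℤ) : hdist x x = 0 := by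
  simp [hdist]

lemma hdist_vvec_fvec {r n : ℕ} (hr : 1 ≤ r) (i : Fin n) (Ej : Finset (Fin n))
    (hi : i ∈ Ej) (hc : Ej.card = r) :
    hdist (vvec r n i) (fvec r n Ej) ≤ 3 * r - 2 := by
  classical
  unfold hdist
  set S := Finset.univ.filter (fun j : Fin (2*r*n) => vvec r n i j ≠ fvec r n Ej j) with hS
  have hcardS : S.card = (S.image Fin.val).card :=
    (Finset.card_image_of_injective S Fin.val_injective).symm
  rw [hcardS]
  have hsub : S.image Fin.val ⊆
      Finset.Ioo (2*r*i.1) (2*r*(i.1+1)) ∪ (Ej \ {i}).image (fun s => 2*r*s.1) := by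
    intro x hx
    obtain ⟨j, hj, rfl⟩ := Finset.mem_image.mp hx
    rw [hS, Finset.mem_filter] at hj
    have hne := hj.2
    unfold vvec fvec at hne
    by_cases hP : 2*r*i.1 ≤ j.1 ∧ j.1 < 2*r*(i.1+1)
    · by_cases hQ : ∃ s ∈ Ej, j.1 = 2*r*s.1
      · simp [hP, hQ] at hne
      · have hne' : j.1 ≠ 2*r*i.1 := fun h => hQ ⟨i, hi, h⟩
        exact Finset.mem_union_left _
          (Finset.mem_Ioo.mpr ⟨lt_of_le_of_ne hP.1 (Ne.symm hne'), hP.2⟩)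
    · by_cases hQ : ∃ s ∈ Ej, j.1 = 2*r*s.1
      · obtain ⟨s, hs, hjs⟩ := hQ
        have hsi : s ≠ i := by
          rintro rfl
          have e : 2*r*(s.1+1) = 2*r*s.1 + 2*r := by ring
          exact hP ⟨le_of_eq hjs.symm, by omega⟩
        exact Finset.mem_union_right _
          (Finset.mem_image.mpr ⟨s, Finset.mem_sdiff.mpr ⟨hs, by simp [hsi]⟩, hjs.symm⟩)
      · simp [hP, hQ] at hne
  calc (S.image Fin.val).card
      ≤ (Finset.Ioo (2*r*i.1) (2*r*(i.1+1)) ∪ (Ej \ {i}).image (fun s => 2*r*s.1)).card :=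
        Finset.card_le_card hsub
    _ ≤ (Finset.Ioo (2*r*i.1) (2*r*(i.1+1))).card + ((Ej \ {i}).image (fun s => 2*r*s.1)).card :=
        Finset.card_union_le _ _
    _ ≤ (2*r - 1) + (r - 1) := by
        have h1 : (Finset.Ioo (2*r*i.1) (2*r*(i.1+1))).card = 2*r - 1 := by
          rw [Nat.card_Ioo]; ring_nf; omega
        have h2 : ((Ej \ {i}).image (fun s => 2*r*s.1)).card ≤ r - 1 := by
          calc _ ≤ (Ej \ {i}).card := Finset.card_image_le
            _ = r - 1 := by rw [Finset.card_sdiff_of_subset (by simp [hi])]; simp [hc]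
        omega
    _ ≤ 3*r - 2 := by omega

/-- if the `r`-uniform hypergraph has a perfect matching `M`, then the
constructed point collection admits an equal clustering into `n + m - n/r` clusters of
size `r` of total Hamming cost at most `B = (3r-2)·n`. -/
theorem perfect_matching_gives_cheap_equal_clustering
    {r n m : ℕ} (hr : 3 ≤ r) (hdvd : r ∣ n)
    (E : Fin m → Finset (Fin n)) (hcard : ∀ j, (E j).card = r)
    (M : Finset (Fin m))
    (hdisj : ∀ j ∈ M, ∀ j' ∈ M, j ≠ j' → Disjoint (E j) (E j'))
    (hcover : ∀ v : Fin n, ∃ j ∈ M, v ∈ E j) :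
    ∃ X : Fin (n + m - n / r) → Multiset (Fin (2 * r * n) → ℤ),
      (∑ i, X i =
        (∑ i : Fin n, Multiset.replicate (r - 1) (vvec r n i)) +
          ∑ j : Fin m, Multiset.replicate r (fvec r n (E j))) ∧
      (∀ i, (X i).card = r) ∧
      (∑ i, hClusterCost (X i)) ≤ (3 * r - 2) * n := by
  classical
  have hr0 : 0 < r := by omega
  choose jM hjM1 hjM2 using hcover
  have huniq : ∀ (i : Fin n) (j : Fin m), j ∈ M → i ∈ E j → j = jM i := by
    intro i j hj hij
    by_contra hne
    exact Finset.disjoint_left.mp (hdisj j hj (jM i) (hjM1 i) hne) hij (hjM2 i)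
  have huniv : M.biUnion E = Finset.univ :=
    Finset.eq_univ_of_forall fun v => Finset.mem_biUnion.mpr ⟨jM v, hjM1 v, hjM2 v⟩
  have hMr : M.card * r = n := by
    have h1 : n = ∑ j ∈ M, (E j).card := by
      rw [← Finset.card_biUnion (fun j hj j' hj' hne => hdisj j hj j' hj' hne), huniv,
        Finset.card_univ, Fintype.card_fin]
    have h2 : ∑ j ∈ M, (E j).card = M.card * r := by
      rw [Finset.sum_congr rfl (fun j _ => hcard j), Finset.sum_const, smul_eq_mul]
    omega
  have hdivM : n / r = M.card := by
    rw [← hMr, Nat.mul_div_cancel _ hr0]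
  have hMm : M.card ≤ m := by
    have := Finset.card_le_univ M
    simpa using this
  have hcardα : Fintype.card (Fin n ⊕ ↥(Mᶜ)) = n + m - n / r := by
    rw [Fintype.card_sum, Fintype.card_fin, Fintype.card_coe, Finset.card_compl,
      Fintype.card_fin, hdivM]
    omega
  set g : Fin n ⊕ ↥(Mᶜ) → Multiset (Fin (2 * r * n) → ℤ) :=
    Sum.elim
      (fun i : Fin n => Multiset.replicate (r - 1) (vvec r n i) + {fvec r n (E (jM i))})
      (fun j : ↥(Mᶜ) => Multiset.replicate r (fvec r n (E j.1))) with hg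
  set e : (Fin n ⊕ ↥(Mᶜ)) ≃ Fin (n + m - n / r) := Fintype.equivFinOfCardEq hcardα with he
  refine ⟨fun k => g (e.symm k), ?_, ?_, ?_⟩
  · rw [Equiv.sum_comp e.symm g, Fintype.sum_sum_type]
    have hkey : (∑ i : Fin n, ({fvec r n (E (jM i))} : Multiset (Fin (2*r*n) → ℤ))) =
        ∑ j ∈ M, Multiset.replicate r (fvec r n (E j)) := by
      have hbi := Finset.sum_biUnion (s := M) (t := E)
        (f := fun i => ({fvec r n (E (jM i))} : Multiset (Fin (2*r*n) → ℤ)))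
        (fun j hj j' hj' hne => hdisj j hj j' hj' hne)
      rw [huniv] at hbi
      simp only at hbi
      rw [show (∑ i : Fin n, ({fvec r n (E (jM i))} : Multiset (Fin (2*r*n) → ℤ))) =
        ∑ i ∈ Finset.univ, ({fvec r n (E (jM i))} : Multiset (Fin (2*r*n) → ℤ)) from rfl, hbi]
      refine Finset.sum_congr rfl fun j hj => ?_
      have hinner : ∀ i ∈ E j, ({fvec r n (E (jM i))} : Multiset (Fin (2*r*n) → ℤ)) =
          {fvec r n (E j)} := by
        intro i hi
        rw [← huniq i j hj hi]
      rw [Finset.sum_congr rfl hinner, Finset.sum_const, hcard, Multiset.nsmul_singleton]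
    simp only [hg, Sum.elim_inl, Sum.elim_inr]
    rw [Finset.sum_add_distrib, hkey]
    have hcompl : (∑ j : ↥(Mᶜ), Multiset.replicate r (fvec r n (E j.1))) =
        ∑ j ∈ Mᶜ, Multiset.replicate r (fvec r n (E j)) :=
      Finset.sum_coe_sort Mᶜ (fun j => Multiset.replicate r (fvec r n (E j)))
    rw [hcompl, add_assoc, Finset.sum_add_sum_compl]
  · intro k
    rcases hk : e.symm k with i | j <;> simp [hg, hk, Multiset.card_replicate]
    omega
  · have hsum := Equiv.sum_comp e.symm (fun a => hClusterCost (g a))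
    rw [hsum, Fintype.sum_sum_type]
    have costv : ∀ i : Fin n, hClusterCost (g (Sum.inl i)) ≤ 3 * r - 2 := by
      intro i
      have hle : hClusterCost (g (Sum.inl i)) ≤
          (((Multiset.replicate (r - 1) (vvec r n i) + {fvec r n (E (jM i))}).map
            (fun x => hdist (vvec r n i) x)).sum) := by
        apply Nat.sInf_le
        exact ⟨vvec r n i, rfl⟩
      refine hle.trans ?_
      rw [Multiset.map_add, Multiset.map_replicate, Multiset.map_singleton,
        Multiset.sum_add, Multiset.sum_replicate, Multiset.sum_singleton, hdist_self,
        smul_zero, zero_add]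
      exact hdist_vvec_fvec (by omega) i _ (hjM2 i) (hcard _)
    have costf : ∀ j : ↥(Mᶜ), hClusterCost (g (Sum.inr j)) = 0 := by
      intro j
      have hle : hClusterCost (g (Sum.inr j)) ≤
          ((Multiset.replicate r (fvec r n (E j.1))).map
            (fun x => hdist (fvec r n (E j.1)) x)).sum := by
        apply Nat.sInf_le
        exact ⟨fvec r n (E j.1), rfl⟩
      rw [Multiset.map_replicate, Multiset.sum_replicate, hdist_self, smul_zero] at hle
      omega
    calc (∑ i : Fin n, hClusterCost (g (Sum.inl i))) +
          ∑ j : ↥(Mᶜ), hClusterCost (g (Sum.inr j))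
        ≤ (∑ _i : Fin n, (3 * r - 2)) + ∑ j : ↥(Mᶜ), 0 := by
          gcongr with i _ j
          · exact costv i
          · exact (costf j).le
      _ = (3 * r - 2) * n := by simp [Finset.sum_const, mul_comm]
end

section
/- For the auxiliary min-cost assignment problem, the following holds: given identical-point groups S_1,...,S_t each of size s and centers c_1,...,c_k (t ≤ k), the minimum over all partitions {Z_1,...,Z_k} of S_1 ∪ ... ∪ S_t with |Z_i| ≤ s of ∑_{i=1}^k ∑_{x ∈ Z_i} ‖x − c_i‖_p is equal to s · min over injections σ: {1,...,t} → {1,...,k} of ∑_{h=1}^t ‖x_h − c_{σ(h)}‖_p, where x_h denotes the common value of the points in S_h. -/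
open Finset

/-! A feasible plan, padded with `k - t` rows that share out the column deficits evenly, becomes
`s` times a doubly stochastic matrix. By Birkhoff's theorem that matrix is a convex combination of
permutation matrices, so the cost of the plan is at least `s` times the cost of the cheapest
injection. Conversely, sending every group in full to its center under an optimal injection is a
feasible plan of exactly that cost. -/

section Birkhoff

variable {R n : Type*} [Fintype n] [DecidableEq n]
  [Field R] [LinearOrder R] [IsStrictOrderedRing R]

theorem le_sum_mul_of_mem_doublyStochastic {M : Matrix n n R} (hM : M ∈ doublyStochastic R n)
    {w : n → n → R} {m : R} (hw : ∀ σ : Equiv.Perm n, m ≤ ∑ i, w i (σ i)) :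
    m ≤ ∑ i, ∑ j, M i j * w i j := by
  have hlin : IsLinearMap R fun M : Matrix n n R => ∑ i, ∑ j, M i j * w i j :=
    ⟨fun A B => by simp only [Matrix.add_apply, add_mul, sum_add_distrib],
     fun c A => by simp only [Matrix.smul_apply, smul_eq_mul, mul_assoc, mul_sum]⟩
  rw [← SetLike.mem_coe, doublyStochastic_eq_convexHull_permMatrix] at hM
  refine convexHull_min ?_ (convex_halfSpace_ge hlin m) hM
  rintro _ ⟨σ, rfl⟩
  simpa [Equiv.Perm.permMatrix, PEquiv.toMatrix_apply, Equiv.toPEquiv_apply] using hw σ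

theorem mul_le_sum_mul_of_sum_row_eq_of_sum_col_eq {M : Matrix n n R} {s : R} (hs : 0 ≤ s)
    (hM : ∀ i j, 0 ≤ M i j) (hrow : ∀ i, ∑ j, M i j = s) (hcol : ∀ j, ∑ i, M i j = s)
    {w : n → n → R} {m : R} (hw : ∀ σ : Equiv.Perm n, m ≤ ∑ i, w i (σ i)) :
    s * m ≤ ∑ i, ∑ j, M i j * w i j := by
  obtain ⟨D, hD, rfl⟩ := (exists_mem_doublyStochastic_eq_smul_iff hs).2 ⟨hM, hrow, hcol⟩
  simp only [Matrix.smul_apply, smul_eq_mul, mul_assoc, ← mul_sum]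
  exact mul_le_mul_of_nonneg_left (le_sum_mul_of_mem_doublyStochastic hD hw) hs

end Birkhoff

section CompleteRows

variable {R ι κ τ : Type*} [Fintype ι] [Fintype τ] [Field R] {s : R} {a : ι → κ → R}

noncomputable def completeRows (s : R) (a : ι → κ → R) : ι ⊕ τ → κ → R :=
  Sum.elim a fun _ j => (s - ∑ h, a h j) / Fintype.card τ

theorem sum_sub_sum_col_eq_card_mul [Fintype κ]
    (hcard : Fintype.card κ = Fintype.card ι + Fintype.card τ)
    (hrow : ∀ h, ∑ j, a h j = s) :
    ∑ j, (s - ∑ h, a h j) = Fintype.card τ * s := by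
  rw [sum_sub_distrib, sum_comm]
  simp only [hrow, sum_const, card_univ, nsmul_eq_mul, hcard]
  push_cast
  ring

theorem completeRows_nonneg [LinearOrder R] [IsStrictOrderedRing R] (ha : ∀ h j, 0 ≤ a h j)
    (hcol : ∀ j, ∑ h, a h j ≤ s) :
    ∀ r j, 0 ≤ completeRows (τ := τ) s a r j
  | .inl h, j => ha h j
  | .inr _, j => div_nonneg (sub_nonneg.2 (hcol j)) (Nat.cast_nonneg _)

theorem sum_completeRows_row [Fintype κ] [CharZero R]
    (hcard : Fintype.card κ = Fintype.card ι + Fintype.card τ)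
    (hrow : ∀ h, ∑ j, a h j = s) : ∀ r, ∑ j, completeRows (τ := τ) s a r j = s
  | .inl h => hrow h
  | .inr u => by
    have : Nonempty τ := ⟨u⟩
    have : (Fintype.card τ : R) ≠ 0 := Nat.cast_ne_zero.2 Fintype.card_ne_zero
    simp only [completeRows, Sum.elim_inr, ← sum_div, sum_sub_sum_col_eq_card_mul hcard hrow]
    field_simp

theorem sum_completeRows_col [Fintype κ] [LinearOrder R] [IsStrictOrderedRing R]
    (hcard : Fintype.card κ = Fintype.card ι + Fintype.card τ)
    (hrow : ∀ h, ∑ j, a h j = s) (hcol : ∀ j, ∑ h, a h j ≤ s) (j : κ) :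
    ∑ r, completeRows (τ := τ) s a r j = s := by
  simp only [completeRows, Fintype.sum_sum_type, Sum.elim_inl, Sum.elim_inr, sum_const,
    card_univ, nsmul_eq_mul]
  rcases eq_or_ne (Fintype.card τ : R) 0 with hτ | hτ
  · -- with no extra rows the deficits, nonnegative and summing to zero, all vanish
    have hdef := (sum_eq_zero_iff_of_nonneg fun j _ => sub_nonneg.2 (hcol j)).1
      (by rw [sum_sub_sum_col_eq_card_mul hcard hrow, hτ, zero_mul]) j (mem_univ j)
    rw [hτ, zero_mul, add_zero]
    linarith
  · field_simp
    ring

end CompleteRows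

theorem mul_le_sum_mul_of_sum_row_eq_of_sum_col_le {R ι κ : Type*} [Fintype ι] [Fintype κ]
    [Field R] [LinearOrder R] [IsStrictOrderedRing R] (hcard : Fintype.card ι ≤ Fintype.card κ)
    {s : R} (hs : 0 ≤ s) {a : ι → κ → R} (ha : ∀ h j, 0 ≤ a h j)
    (hrow : ∀ h, ∑ j, a h j = s) (hcol : ∀ j, ∑ h, a h j ≤ s)
    {w : ι → κ → R} {m : R} (hw : ∀ σ : ι ↪ κ, m ≤ ∑ h, w h (σ h)) :
    s * m ≤ ∑ h, ∑ j, a h j * w h j := by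
  classical
  let τ := Fin (Fintype.card κ - Fintype.card ι)
  have hcardτ : Fintype.card κ = Fintype.card ι + Fintype.card τ := by
    simp only [τ, Fintype.card_fin]; omega
  let e : ι ⊕ τ ≃ κ := Fintype.equivOfCardEq (by rw [Fintype.card_sum, ← hcardτ])
  let A := completeRows (τ := τ) s a
  let W : ι ⊕ τ → κ → R := Sum.elim w 0
  have hsquare := mul_le_sum_mul_of_sum_row_eq_of_sum_col_eq hs
    (M := fun r c => A r (e c)) (w := fun r c => W r (e c)) (m := m)
    (fun r c => completeRows_nonneg ha hcol r (e c))
    (fun r => by rw [e.sum_comp]; exact sum_completeRows_row hcardτ hrow r)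
    (fun c => sum_completeRows_col hcardτ hrow hcol (e c))
    (fun σ => by
      simpa [W, Fintype.sum_sum_type] using
        hw ((Function.Embedding.inl.trans σ.toEmbedding).trans e.toEmbedding))
  calc s * m ≤ _ := hsquare
    _ = ∑ r, ∑ j, A r j * W r j := sum_congr rfl fun r _ => e.sum_comp fun j => A r j * W r j
    _ = _ := by simp [Fintype.sum_sum_type, A, W, completeRows]

theorem sum_pi_single_embedding_le {ι κ M : Type*} [Fintype ι] [DecidableEq κ]
    [AddCommMonoid M] [Preorder M] (σ : ι ↪ κ) {s : M} (hs : 0 ≤ s) (j : κ) :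
    ∑ h, (Pi.single (σ h) s : κ → M) j ≤ s := by
  rw [← sum_map univ σ fun i => Pi.single i s j, sum_pi_single j fun _ => s]
  split_ifs
  exacts [le_rfl, hs]

theorem min_cost_capacitated_assignment_eq_min_injection_general
    {d t k s : ℕ} (p : ℕ) (ht : t ≤ k)
    (x : Fin t → Fin d → ℤ) (c : Fin k → Fin d → ℝ) :
    sInf {r : ℝ | ∃ a : Fin t → Fin k → ℕ,
        (∀ h, ∑ i, a h i = s) ∧ (∀ i, ∑ h, a h i ≤ s) ∧
        r = ∑ h, ∑ i, (a h i : ℝ) * lpNorm p (fun j => (x h j : ℝ) - c i j)} =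
      (s : ℝ) * sInf {r : ℝ | ∃ σ : Fin t ↪ Fin k,
        r = ∑ h, lpNorm p (fun j => (x h j : ℝ) - c (σ h) j)} := by
  set w : Fin t → Fin k → ℝ := fun h i => lpNorm p fun j => (x h j : ℝ) - c i j
  have hcard : Fintype.card (Fin t) ≤ Fintype.card (Fin k) := by simpa using ht
  have := Function.Embedding.nonempty_of_card_le hcard
  obtain ⟨σ₀, hσ₀⟩ := Finite.exists_min fun σ : Fin t ↪ Fin k => ∑ h, w h (σ h)
  have hmin : sInf {r | ∃ σ : Fin t ↪ Fin k, r = ∑ h, w h (σ h)} = ∑ h, w h (σ₀ h) :=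
    IsLeast.csInf_eq ⟨⟨σ₀, rfl⟩, by rintro _ ⟨σ, rfl⟩; exact hσ₀ σ⟩
  rw [hmin]
  refine IsLeast.csInf_eq ⟨⟨fun h => Pi.single (σ₀ h) s, fun h => by simp,
    sum_pi_single_embedding_le σ₀ (Nat.zero_le s), ?_⟩, ?_⟩
  · simp [w, Pi.single_apply, mul_sum]
  · rintro _ ⟨a, hrow, hcol, rfl⟩
    exact mul_le_sum_mul_of_sum_row_eq_of_sum_col_le hcard (Nat.cast_nonneg s)
      (fun _ _ => Nat.cast_nonneg _) (by exact_mod_cast hrow) (by exact_mod_cast hcol) hσ₀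

/-- the minimum cost of assigning `t` groups of `s` identical points
(with values `x₁,…,x_t`) to `k` centers, each center receiving at most `s` points,
equals `s` times the minimum over injections `σ : Fin t ↪ Fin k` of
`∑ h ‖x_h - c_{σ(h)}‖_p`. -/
theorem min_cost_capacitated_assignment_eq_min_injection
    {d t k s : ℕ} (p : ℕ) (hp : 1 ≤ p) (ht : t ≤ k) (hs : 0 < s)
    (x : Fin t → Fin d → ℤ) (c : Fin k → Fin d → ℝ) :
    sInf {r : ℝ | ∃ a : Fin t → Fin k → ℕ,
        (∀ h, ∑ i, a h i = s) ∧ (∀ i, ∑ h, a h i ≤ s) ∧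
        r = ∑ h, ∑ i, (a h i : ℝ) * lpNorm p (fun j => (x h j : ℝ) - c i j)} =
      (s : ℝ) * sInf {r : ℝ | ∃ σ : Fin t ↪ Fin k,
        r = ∑ h, lpNorm p (fun j => (x h j : ℝ) - c (σ h) j)} :=
  min_cost_capacitated_assignment_eq_min_injection_general p ht x c
end
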